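/- arXiv:2205.13180 — 3 statements merged into one kernel-verified Lean document; each statement's English description precedes it below -/
import Mathlib

section
/- Let F be a totally real number field, B either F, a CM extension of F, or a totally definite quaternion algebra over F, and O an order of B. Let V = B^n with a totally positive Hermitian form f (with respect to the main involution of B). Then every nonzero element x of an O-lattice L ⊆ V can be written as a finite sum of primitive elements of L, where x ∈ L is primitive if it cannot be written x = y + z with y, z ∈ L nonzero and f(y,z) = 0. -/
/-! For `x ≠ 0` write `f(x,x) = c` with `c ∈ F` totally positive; then `Tr_{F/ℚ} c > 0` because `F`
is totally real. This trace is additive along orthogonal splittings `x = y + z`, and since `L` is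
finitely generated the values `f(L,L)` lie in a finitely generated `ℤ`-module, so the traces lie in
a finitely generated `ℤ`-submodule of `ℚ` and are bounded below by some `ε > 0`. Splitting a
non-primitive vector therefore lowers the trace by at least `ε`, and the process terminates. -/

open NumberField ComplexEmbedding in
theorem NumberField.trace_pos_of_forall_pos {F : Type*} [Field F] [NumberField F]
    (htotreal : ∀ φ : F →+* ℂ, ∀ x : F, (φ x).im = 0) {c : F} (hc : ∀ σ : F →+* ℝ, 0 < σ c) :
    0 < Algebra.trace ℚ F c := by
  have hσ (σ : F →ₐ[ℚ] ℂ) : 0 < (σ c).re := by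
    have hreal : IsReal (σ : F →+* ℂ) :=
      isReal_iff.mpr (RingHom.ext fun x => Complex.conj_eq_iff_im.mpr (htotreal _ x))
    exact hc hreal.embedding
  have hsum : ((Algebra.trace ℚ F c : ℚ) : ℂ) = ∑ σ : F →ₐ[ℚ] ℂ, σ c := by
    simpa using trace_eq_sum_embeddings (K := ℚ) (L := F) ℂ (x := c)
  have : Nonempty (F →ₐ[ℚ] ℂ) := ⟨IsAlgClosed.lift⟩
  have : (0 : ℝ) < ((Algebra.trace ℚ F c : ℚ) : ℂ).re := by
    rw [hsum, Complex.re_sum]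
    exact Finset.sum_pos (fun σ _ => hσ σ) Finset.univ_nonempty
  exact_mod_cast (Complex.ratCast_re _ ▸ this)

theorem Submodule.FG.exists_pos_forall_pos_le {P : Submodule ℤ ℚ} (hP : P.FG) :
    ∃ ε > 0, ∀ q ∈ P, 0 < q → ε ≤ q := by
  obtain ⟨s, rfl⟩ := hP
  set N : ℕ := ∏ q ∈ s, q.den
  have hN : 0 < N := Finset.prod_pos fun q _ => q.den_pos
  have hspan : span ℤ (s : Set ℚ) ≤ span ℤ {(N : ℚ)⁻¹} := by
    rw [span_le]
    intro q hq
    obtain ⟨k, hk⟩ : q.den ∣ N := Finset.dvd_prod_of_mem Rat.den (Finset.mem_coe.mp hq)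
    have hk0 : k ≠ 0 := by rintro rfl; simp [hk] at hN
    refine mem_span_singleton.mpr ⟨q.num * k, ?_⟩
    rw [zsmul_eq_mul, hk]
    push_cast
    rw [mul_inv, mul_mul_mul_comm, mul_inv_cancel₀ (by exact_mod_cast hk0), mul_one,
      ← div_eq_mul_inv, Rat.num_div_den]
  refine ⟨(N : ℚ)⁻¹, by positivity, fun q hq hq0 => ?_⟩
  obtain ⟨a, rfl⟩ := mem_span_singleton.mp (hspan hq)
  rw [zsmul_eq_mul] at hq0 ⊢
  have ha : (1 : ℚ) ≤ a := by exact_mod_cast (pos_iff_pos_of_mul_pos hq0).mpr (by positivity)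
  exact le_mul_of_one_le_left (by positivity) ha

theorem Submodule.exists_fg_forall_apply_mem {U V W : Type*} [AddCommGroup U] [AddCommGroup V]
    [AddCommGroup W] (f : U → V → W) (hl : ∀ x₁ x₂ y, f (x₁ + x₂) y = f x₁ y + f x₂ y)
    (hr : ∀ x y₁ y₂, f x (y₁ + y₂) = f x y₁ + f x y₂) {L : Submodule ℤ U} {L' : Submodule ℤ V}
    (hL : L.FG) (hL' : L'.FG) : ∃ M : Submodule ℤ W, M.FG ∧ ∀ x ∈ L, ∀ y ∈ L', f x y ∈ M := by
  let g : U →ₗ[ℤ] V →ₗ[ℤ] W := LinearMap.mk₂ ℤ f hl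
    (fun m x y => map_zsmul (AddMonoidHom.mk' (f · y) (hl · · y)) m x) hr
    (fun m x y => map_zsmul (AddMonoidHom.mk' (f x) (hr x)) m y)
  exact ⟨map₂ g L L', hL.map₂ g hL', fun x hx y hy => apply_mem_map₂ g hx hy⟩

theorem exists_pos_forall_le_trace_of_fg {F B : Type*} [Field F] [NumberField F] [Ring B]
    [Nontrivial B] [Algebra F B] {M : Submodule ℤ B} (hM : M.FG) :
    ∃ ε > 0, ∀ c : F, algebraMap F B c ∈ M → 0 < Algebra.trace ℚ F c →
      ε ≤ Algebra.trace ℚ F c := by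
  let ι : F →ₗ[ℤ] B := (Algebra.linearMap F B).restrictScalars ℤ
  have hP : (M.comap ι).FG := Submodule.fg_of_fg_map_injective ι (algebraMap F B).injective
    (hM.of_le (Submodule.map_comap_le ι M))
  obtain ⟨ε, hε, hle⟩ := (hP.map ((Algebra.trace ℚ F).restrictScalars ℤ)).exists_pos_forall_pos_le
  exact ⟨ε, hε, fun c hc hpos => hle _ ⟨c, hc, rfl⟩ hpos⟩

section Primitive

variable {V W : Type*} [AddMonoid V] [Zero W]

def IsPrimitive (L : Set V) (f : V → V → W) (y : V) : Prop :=
  y ∈ L ∧ y ≠ 0 ∧ ¬ ∃ u v : V, u ∈ L ∧ v ∈ L ∧ u ≠ 0 ∧ v ≠ 0 ∧ y = u + v ∧ f u v = 0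

theorem exists_list_isPrimitive_sum_eq {K : Type*} [AddCommGroup K] [LinearOrder K]
    [IsOrderedAddMonoid K] [Archimedean K] {L : Set V} {f : V → V → W} (h : V → K) {ε : K}
    (hε : 0 < ε) (hle : ∀ y ∈ L, y ≠ 0 → ε ≤ h y)
    (hadd : ∀ u ∈ L, ∀ v ∈ L, f u v = 0 → h (u + v) = h u + h v) {x : V} (hx : x ∈ L)
    (hx0 : x ≠ 0) : ∃ l : List V, (∀ y ∈ l, IsPrimitive L f y) ∧ l.sum = x := by
  obtain ⟨k, hk⟩ := Archimedean.arch (h x) hε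
  induction k generalizing x with
  | zero => exact absurd (hε.trans_le (hle x hx hx0)) (by simpa using hk)
  | succ k ih =>
    by_cases hsplit : ∃ u v : V, u ∈ L ∧ v ∈ L ∧ u ≠ 0 ∧ v ≠ 0 ∧ x = u + v ∧ f u v = 0
    · obtain ⟨u, v, hu, hv, hu0, hv0, rfl, huv⟩ := hsplit
      rw [hadd u hu v hv huv, succ_nsmul] at hk
      have hu_le : h u ≤ k • ε :=
        le_of_add_le_add_right (hk.trans' (add_le_add le_rfl (hle v hv hv0)))
      have hv_le : h v ≤ k • ε := le_of_add_le_add_right (a := ε) <| by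
        rw [add_comm (h v)]
        exact hk.trans' (add_le_add (hle u hu hu0) le_rfl)
      obtain ⟨lu, hlu, rfl⟩ := ih hu hu0 hu_le
      obtain ⟨lv, hlv, rfl⟩ := ih hv hv0 hv_le
      exact ⟨lu ++ lv, by simpa [or_imp, forall_and] using ⟨hlu, hlv⟩, List.sum_append⟩
    · exact ⟨[x], by simpa using ⟨hx, hx0, hsplit⟩, by simp⟩

end Primitive

theorem sum_of_primitive_elements_general
    (F : Type*) [Field F] [NumberField F]
    -- `F` is totally real
    (htotreal : ∀ φ : F →+* ℂ, ∀ x : F, (φ x).im = 0)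
    (B : Type*) [Ring B] [StarRing B] [Algebra F B]
    -- `V = Bⁿ` and the Hermitian form `f`
    (n : ℕ) (f : (Fin n → B) → (Fin n → B) → B)
    (hf_add : ∀ x₁ x₂ y : Fin n → B, f (x₁ + x₂) y = f x₁ y + f x₂ y)
    (hf_conj : ∀ x y : Fin n → B, f y x = star (f x y))
    -- `f` is totally positive
    (hf_pos : ∀ x : Fin n → B, x ≠ 0 → ∃ c : F,
      f x x = algebraMap F B c ∧ ∀ σ : F →+* ℝ, 0 < σ c)
    -- `L` is an `O`-lattice in `V`
    (L : Submodule ℤ (Fin n → B)) (hLfg : L.FG) :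
    ∀ x ∈ L, x ≠ 0 →
      ∃ l : List (Fin n → B),
        (∀ y ∈ l, y ∈ L ∧ y ≠ 0 ∧
          ¬ ∃ u v : Fin n → B, u ∈ L ∧ v ∈ L ∧ u ≠ 0 ∧ v ≠ 0 ∧ y = u + v ∧ f u v = 0) ∧
        l.sum = x := by
  intro x hx hx0
  have : Nontrivial B := by
    obtain ⟨i, hi⟩ := Function.ne_iff.mp hx0
    exact nontrivial_of_ne _ _ hi
  have hf_addr (x y₁ y₂ : Fin n → B) : f x (y₁ + y₂) = f x y₁ + f x y₂ := by
    rw [hf_conj, hf_add, star_add, ← hf_conj, ← hf_conj]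
  have hf_zero : f 0 0 = 0 := by simpa using hf_add 0 0 0
  obtain ⟨M, hM, hfM⟩ := Submodule.exists_fg_forall_apply_mem f hf_add hf_addr hLfg hLfg
  obtain ⟨ε, hε, hεle⟩ := exists_pos_forall_le_trace_of_fg (F := F) hM
  let q : (Fin n → B) → F := fun y => Function.invFun (algebraMap F B) (f y y)
  have hq (y : Fin n → B) : algebraMap F B (q y) = f y y := by
    refine Function.invFun_eq ?_
    by_cases hy : y = 0
    · exact ⟨0, by rw [hy, hf_zero, map_zero]⟩
    · obtain ⟨c, hc, -⟩ := hf_pos y hy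
      exact ⟨c, hc.symm⟩
  refine exists_list_isPrimitive_sum_eq (fun y => Algebra.trace ℚ F (q y)) hε ?_ ?_ hx hx0
  · intro y hy hy0
    obtain ⟨c, hc, hpos⟩ := hf_pos y hy0
    obtain rfl : q y = c := (algebraMap F B).injective ((hq y).trans hc)
    exact hεle _ (hc ▸ hfM y hy y hy) (NumberField.trace_pos_of_forall_pos htotreal hpos)
  · intro u _ v _ huv
    have hvu : f v u = 0 := by rw [hf_conj, huv, star_zero]
    have : q (u + v) = q u + q v := (algebraMap F B).injective <| by
      rw [map_add, hq, hq, hq, hf_add, hf_addr, hf_addr, huv, hvu, add_zero, zero_add]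
    simp only [this, map_add]

/-- Let `F` be a totally real number field, `B` either `F` itself, a CM extension of `F`, or a
totally definite quaternion algebra over `F`, equipped with its main involution `star` (which
fixes `F`), and `O` an order of `B`.  Let `V = Bⁿ` with a totally positive Hermitian form `f`.
Then every nonzero element `x` of an `O`-lattice `L ⊆ V` is a finite sum of primitive elements
of `L`, where `x ∈ L` is primitive if it cannot be written `x = y + z` with `y, z ∈ L` nonzero
and `f(y,z) = 0`. -/
theorem sum_of_primitive_elements
    (F : Type*) [Field F] [NumberField F]
    -- `F` is totally real
    (htotreal : ∀ φ : F →+* ℂ, ∀ x : F, (φ x).im = 0)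
    (B : Type*) [Ring B] [StarRing B] [Algebra F B]
    -- the main involution fixes `F`
    (hstarF : ∀ a : F, star (algebraMap F B a) = algebraMap F B a)
    -- `B` is `F`, a CM field over `F`, or a totally definite quaternion algebra over `F`
    (hcase :
      Nonempty (B ≃ₐ[F] F) ∨
      ((∀ x y : B, x * y = y * x) ∧ IsField B ∧ Module.finrank F B = 2 ∧
        ∀ φ : B →+* ℂ, ∃ x : B, (φ x).im ≠ 0) ∨
      (∃ a b : F, Nonempty (B ≃ₐ[F] QuaternionAlgebra F a 0 b) ∧
        ∀ σ : F →+* ℝ, σ a < 0 ∧ σ b < 0))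
    -- `O` is an order of `B`: a unitary subring which is a lattice in `B`
    (O : Subring B)
    (hOfg : ∃ s : Finset B, (s : Set B) ⊆ (O : Set B) ∧
      ∀ b ∈ O, b ∈ Submodule.span ℤ (s : Set B))
    (hOfull : ∀ b : B, ∃ m : ℤ, m ≠ 0 ∧ (m : B) * b ∈ O)
    -- `V = Bⁿ` and the Hermitian form `f`
    (n : ℕ) (f : (Fin n → B) → (Fin n → B) → B)
    (hf_add : ∀ x₁ x₂ y : Fin n → B, f (x₁ + x₂) y = f x₁ y + f x₂ y)
    (hf_smul : ∀ (a : B) (x y : Fin n → B), f (a • x) y = a * f x y)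
    (hf_conj : ∀ x y : Fin n → B, f y x = star (f x y))
    -- `f` is totally positive
    (hf_pos : ∀ x : Fin n → B, x ≠ 0 → ∃ c : F,
      f x x = algebraMap F B c ∧ ∀ σ : F →+* ℝ, 0 < σ c)
    -- `L` is an `O`-lattice in `V`
    (L : Submodule ℤ (Fin n → B)) (hLfg : L.FG)
    (hLfull : ∀ v : Fin n → B, ∃ m : ℤ, m ≠ 0 ∧ m • v ∈ L)
    (hLO : ∀ a ∈ O, ∀ x ∈ L, a • x ∈ L) :
    ∀ x ∈ L, x ≠ 0 →
      ∃ l : List (Fin n → B),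
        (∀ y ∈ l, y ∈ L ∧ y ≠ 0 ∧
          ¬ ∃ u v : Fin n → B, u ∈ L ∧ v ∈ L ∧ u ≠ 0 ∧ v ≠ 0 ∧ y = u + v ∧ f u v = 0) ∧
        l.sum = x :=
  sum_of_primitive_elements_general F htotreal B n f hf_add hf_conj hf_pos L hLfg
end

section
/- Let G be a group, U ≤ G a subgroup, and n: G → Q a group homomorphism to an abelian group Q. Let G¹ = ker(n), U¹ = U ∩ G¹, and Γ ≤ G a subgroup. If n(U)·n(Γ) = Q, then the natural map of double coset spaces U¹\G¹/Γ¹ → U\G/Γ (where Γ¹ = Γ ∩ G¹) is surjective; and if additionally for all u ∈ U, γ ∈ Γ with n(u)n(γ) = 1 one has n(u) = n(γ) = 1, then the map is injective, hence bijective. -/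
/-- Let `G` be a group, `U ≤ G` a subgroup, `n : G → Q` a homomorphism to an abelian group,
`G¹ = ker n`, `U¹ = U ∩ G¹`, `Γ ≤ G` another subgroup, `Γ¹ = Γ ∩ G¹`.  If `n(U)·n(Γ) = Q`,
then the natural map `U¹\G¹/Γ¹ → U\G/Γ` is surjective; if moreover `n(u)n(γ) = 1` with
`u ∈ U`, `γ ∈ Γ` forces `n(u) = n(γ) = 1`, it is also injective, hence bijective. -/
theorem double_coset_norm_one (G Q : Type*) [Group G] [CommGroup Q] (n : G →* Q)
    (U Γ : Subgroup G) (hsurj : ∀ q : Q, ∃ u ∈ U, ∃ γ ∈ Γ, n u * n γ = q) :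
    (∀ g : G, ∃ g₁ : G, n g₁ = 1 ∧ ∃ u ∈ U, ∃ γ ∈ Γ, g = u * g₁ * γ) ∧
    ((∀ u ∈ U, ∀ γ ∈ Γ, n u * n γ = 1 → n u = 1 ∧ n γ = 1) →
      ∀ g₁ g₂ : G, n g₁ = 1 → n g₂ = 1 →
        (∃ u ∈ U, ∃ γ ∈ Γ, g₂ = u * g₁ * γ) →
        ∃ u ∈ U, n u = 1 ∧ ∃ γ ∈ Γ, n γ = 1 ∧ g₂ = u * g₁ * γ) := by
  constructor
  · intro g
    obtain ⟨u, hu, γ, hγ, hq⟩ := hsurj (n g)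
    refine ⟨u⁻¹ * g * γ⁻¹, ?_, u, hu, γ, hγ, by group⟩
    have : n u * n (u⁻¹ * g * γ⁻¹) * n γ = n g := by
      simp only [map_mul, map_inv]; group
    have h2 : n u * n γ * n (u⁻¹ * g * γ⁻¹) = n g := by
      rw [← this, mul_assoc, mul_assoc, mul_comm (n γ), mul_assoc]
    rw [hq] at h2
    simpa using h2
  · intro hinj g₁ g₂ h₁ h₂ ⟨u, hu, γ, hγ, hg⟩
    have : n u * n γ = 1 := by
      have := congrArg n hg
      simp only [map_mul, h₁, mul_one] at this
      rw [h₂] at this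
      exact this.symm
    obtain ⟨hnu, hnγ⟩ := hinj u hu γ hγ this
    exact ⟨u, hu, hnu, γ, hγ, hnγ, hg⟩
end

section
/- Let M_1(D,1) = Π_{p|D}(p-1)/24, where D is a squarefree positive integer with an odd number of prime factors. If the numerator of M_1(D,1) (in lowest terms) equals 1 and 1/M_1(D,1) is an even integer, then every prime p dividing D satisfies (p-1) | 24, hence p ∈ {2,3,5,7,13}. -/
/-- Let `M₁(D,1) = Π_{p|D}(p-1)/24` for `D` squarefree with an odd number of prime factors.
If the numerator of `M₁(D,1)` in lowest terms is `1` and `1/M₁(D,1)` is an even integer,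
then every prime `p ∣ D` satisfies `(p-1) ∣ 24`, hence `p ∈ {2,3,5,7,13}`. -/
theorem mass_one_forces_small_primes (D : ℕ) (hD : 0 < D) (hsf : Squarefree D)
    (hodd : Odd D.primeFactors.card) (M : ℚ)
    (hM : M = (∏ p ∈ D.primeFactors, ((p : ℚ) - 1)) / 24)
    (hnum : M.num = 1) (heven : ∃ m : ℕ, Even m ∧ M = 1 / (m : ℚ)) :
    ∀ p : ℕ, p.Prime → p ∣ D → (p - 1) ∣ 24 ∧ p ∈ ({2, 3, 5, 7, 13} : Finset ℕ) := by
  obtain ⟨m, hmev, hMeq⟩ := heven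
  have hMne : M ≠ 0 := by
    intro h; rw [h] at hnum; simp at hnum
  have hm0 : (m : ℚ) ≠ 0 := by
    intro h
    apply hMne
    rw [hMeq, h]; simp
  set N : ℕ := ∏ p ∈ D.primeFactors, (p - 1) with hN
  have hcast : (N : ℚ) = ∏ p ∈ D.primeFactors, ((p : ℚ) - 1) := by
    rw [hN, Nat.cast_prod]
    refine Finset.prod_congr rfl fun p hp => ?_
    have hp' : 1 ≤ p := (Nat.prime_of_mem_primeFactors hp).one_lt.le
    push_cast [Nat.cast_sub hp']
    ring
  have key : (m * N : ℚ) = 24 := by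
    have heq : (N : ℚ) / 24 = 1 / m := by rw [hcast, ← hM, hMeq]
    field_simp at heq
    linarith
  have keyN : m * N = 24 := by exact_mod_cast key
  have hNdvd : N ∣ 24 := Dvd.intro_left m keyN
  intro p hp hpd
  have hpm : p ∈ D.primeFactors := Nat.mem_primeFactors.mpr ⟨hp, hpd, hD.ne'⟩
  have h1 : (p - 1) ∣ N := Finset.dvd_prod_of_mem _ hpm
  have h2 : (p - 1) ∣ 24 := h1.trans hNdvd
  refine ⟨h2, ?_⟩
  have hple : p - 1 ≤ 24 := Nat.le_of_dvd (by norm_num) h2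
  have hple' : p ≤ 25 := by omega
  have h2' : 2 ≤ p := hp.two_le
  interval_cases p <;> revert hp h2 <;> decide
end
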